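/- arXiv:1611.05112 — 2 statements merged into one kernel-verified Lean document; each statement's English description precedes it below -/
import Mathlib

section
/- The matrix Z = (R₂R₁)² satisfies: Z ≠ I, Z² = I, Z commutes with R₁ and with R₂, and (Z·R₃)² = T_{(−1−i√2, −2)}. -/
open Matrix

noncomputable section

/-- i√2. -/
def s2 : ℂ := Complex.I * Real.sqrt 2

/-- R₁ = [[1,0,0],[0,1,0],[0,1−i√2,−1]]. -/
def R₁ : Matrix (Fin 3) (Fin 3) ℂ := !![1, 0, 0; 0, 1, 0; 0, 1 - s2, -1]

/-- R₂ = [[1,0,0],[0,−1+i√2,2],[0,1+i√2,1−i√2]]. -/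
def R₂ : Matrix (Fin 3) (Fin 3) ℂ := !![1, 0, 0; 0, -1 + s2, 2; 0, 1 + s2, 1 - s2]

/-- R₃ = [[1,0,0],[(1+i√2)/2,1,−1−i√2],[1,0,−1]]. -/
def R₃ : Matrix (Fin 3) (Fin 3) ℂ := !![1, 0, 0; (1 + s2) / 2, 1, -1 - s2; 1, 0, -1]

/-- The translation matrix T_v for v = (v₁, v₂). -/
def T (v₁ v₂ : ℂ) : Matrix (Fin 3) (Fin 3) ℂ := !![1, 0, 0; v₁, 1, 0; v₂, 0, 1]

/-- A₁, the linear part of R₁. -/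
def A₁ : Matrix (Fin 2) (Fin 2) ℂ := !![1, 0; 1 - s2, -1]

/-- A₂, the linear part of R₂. -/
def A₂ : Matrix (Fin 2) (Fin 2) ℂ := !![-1 + s2, 2; 1 + s2, 1 - s2]

/-- A₃, the linear part of R₃. -/
def A₃ : Matrix (Fin 2) (Fin 2) ℂ := !![1, -1 - s2; 0, -1]

end

lemma hs2 : s2 ^ 2 = -2 := by
  have : (Real.sqrt 2 : ℂ) ^ 2 = 2 := by
    rw [← Complex.ofReal_pow, Real.sq_sqrt (by norm_num)]; norm_num
  simp [s2, mul_pow, Complex.I_sq, this]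

lemma hs3 : s2 ^ 3 = -2 * s2 := by
  have : s2 ^ 3 = s2 ^ 2 * s2 := by ring
  rw [this, hs2]

lemma hs4 : s2 ^ 4 = 4 := by
  have : s2 ^ 4 = (s2 ^ 2) ^ 2 := by ring
  rw [this, hs2]; norm_num

/-- Z = (R₂R₁)² is a nontrivial involution commuting with R₁ and R₂,
and (Z·R₃)² is the translation by (−1−i√2, −2). -/
theorem stmt_11 :
    (R₂ * R₁) ^ 2 ≠ 1 ∧ ((R₂ * R₁) ^ 2) ^ 2 = 1 ∧
    (R₂ * R₁) ^ 2 * R₁ = R₁ * (R₂ * R₁) ^ 2 ∧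
    (R₂ * R₁) ^ 2 * R₂ = R₂ * (R₂ * R₁) ^ 2 ∧
    ((R₂ * R₁) ^ 2 * R₃) ^ 2 = T (-1 - s2) (-2) := by
  have hZ : (R₂ * R₁) ^ 2 = !![1, 0, 0; 0, -1, 0; 0, 0, -1] := by
    ext i j
    fin_cases i <;> fin_cases j <;>
      simp [R₁, R₂, pow_two, Matrix.mul_apply, Fin.sum_univ_succ, Matrix.vecHead, Matrix.vecTail] <;>
      (try ring_nf) <;> (try simp [hs2, hs3, hs4]) <;> (try ring)
  refine ⟨?_, ?_, ?_, ?_, ?_⟩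
  · rw [hZ]
    intro h
    have := congrFun (congrFun h 1) 1
    simp [Matrix.one_apply] at this
    norm_num at this
  · rw [hZ]
    ext i j
    fin_cases i <;> fin_cases j <;>
      simp [pow_two, Matrix.mul_apply, Fin.sum_univ_succ, Matrix.one_apply, Matrix.vecHead, Matrix.vecTail]
  · rw [hZ]
    ext i j
    fin_cases i <;> fin_cases j <;>
      simp [R₁, Matrix.mul_apply, Fin.sum_univ_succ, Matrix.vecHead, Matrix.vecTail] <;> (try ring)
  · rw [hZ]
    ext i j
    fin_cases i <;> fin_cases j <;>
      simp [R₂, Matrix.mul_apply, Fin.sum_univ_succ, Matrix.vecHead, Matrix.vecTail] <;> (try ring)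
  · rw [hZ]
    ext i j
    fin_cases i <;> fin_cases j <;>
      simp [R₃, T, pow_two, Matrix.mul_apply, Fin.sum_univ_succ, Matrix.vecHead, Matrix.vecTail] <;>
      (try ring_nf) <;> (try simp [hs2, hs3, hs4]) <;> (try ring)
end

section
/- The subgroup of GL(2,ℂ) generated by the matrices A₁, A₂, A₃ has exactly 48 elements and is isomorphic as a group to GL(2, 𝔽₃), the group of invertible 2×2 matrices over the field with three elements. (This group is the Shephard–Todd reflection group G₁₂.) -/
open Matrix

open scoped MatrixGroups

/-- The subgroup of GL(2,ℂ) generated by (the invertible-matrix lifts of) a set of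
2×2 matrices. -/
noncomputable def genGL2 (S : Set (Matrix (Fin 2) (Fin 2) ℂ)) : Subgroup (GL (Fin 2) ℂ) :=
  Subgroup.closure {g : GL (Fin 2) ℂ | (g : Matrix (Fin 2) (Fin 2) ℂ) ∈ S}

/-!
The entries of `A₁, A₂, A₃` lie in `ℤ[√-2]`, so the group they generate is the injective image of
the group `Γ` they generate in `GL₂(ℤ[√-2])`. The generators are involutions, so `Γ` is their
monoid closure, and a breadth-first enumeration finds that it consists of 48 matrices.
Reduction modulo the prime `(√-2 - 1)` above `3`, i.e. `√-2 ↦ 1`, is injective on these 48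
matrices, so it embeds `Γ` into `GL₂(𝔽₃)`, which has 48 elements as well.
-/

open Zsqrtd (sqrtd lift lift_injective)

local notation "𝕄" => Matrix (Fin 2) (Fin 2) (ℤ√(-2))

section ClosureEnumeration

variable {M : Type*} [Monoid M] [DecidableEq M]

def closureStep (gens S : List M) : List M :=
  (S ++ S.flatMap fun x => gens.map (x * ·)).dedup

lemma mem_closureStep_of_mem {gens S : List M} {x : M} (hx : x ∈ S) : x ∈ closureStep gens S :=
  List.mem_dedup.mpr (List.mem_append_left _ hx)

lemma one_mem_iterate_closureStep (gens : List M) (n : ℕ) : 1 ∈ (closureStep gens)^[n] [1] := by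
  induction n with
  | zero => exact List.mem_singleton_self 1
  | succ n ih => exact Function.iterate_succ_apply' _ _ _ ▸ mem_closureStep_of_mem ih

lemma mem_closure_of_mem_iterate_closureStep {gens : List M} {n : ℕ} {x : M}
    (hx : x ∈ (closureStep gens)^[n] [1]) : x ∈ Submonoid.closure {g | g ∈ gens} := by
  induction n generalizing x with
  | zero =>
    rw [Function.iterate_zero_apply, List.mem_singleton] at hx
    exact hx ▸ one_mem _
  | succ n ih =>
    rw [Function.iterate_succ_apply', closureStep, List.mem_dedup, List.mem_append,
      List.mem_flatMap] at hx
    obtain hx | ⟨y, hy, hx⟩ := hx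
    · exact ih hx
    · obtain ⟨g, hg, rfl⟩ := List.mem_map.mp hx
      exact mul_mem (ih hy) (Submonoid.subset_closure hg)

lemma coe_closure_eq_of_iterate_closureStep {gens : List M} {n : ℕ}
    (hmul : ∀ x ∈ (closureStep gens)^[n] [1], ∀ g ∈ gens, x * g ∈ (closureStep gens)^[n] [1]) :
    (Submonoid.closure {g | g ∈ gens} : Set M) = {x | x ∈ (closureStep gens)^[n] [1]} := by
  refine Set.Subset.antisymm (fun x hx => ?_) fun x hx => mem_closure_of_mem_iterate_closureStep hx
  induction hx using Submonoid.closure_induction_right with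
  | one => exact one_mem_iterate_closureStep gens n
  | mul_right x _ g hg hx => exact hmul x hx g hg

end ClosureEnumeration

lemma Subgroup.closure_toSubmonoid_of_inv_subset {G : Type*} [Group G] {s : Set G} (hs : s⁻¹ ⊆ s) :
    (Subgroup.closure s).toSubmonoid = Submonoid.closure s := by
  rw [closure_toSubmonoid, Set.union_eq_left.mpr hs]

section Units

variable {M N : Type*} [Monoid M] [Monoid N] {s : Set M}

lemma Units.image_map_val_preimage (f : M →* N) (hs : ∀ x ∈ s, IsUnit x) :
    Units.map f '' (Units.val ⁻¹' s) = Units.val ⁻¹' (f '' s) := by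
  refine Set.Subset.antisymm ?_ fun v ⟨x, hx, hxv⟩ => ?_
  · rintro _ ⟨u, hu, rfl⟩
    exact ⟨u, hu, rfl⟩
  · obtain ⟨u, rfl⟩ := hs x hx
    exact ⟨u, hx, Units.ext hxv⟩

lemma Units.image_val_closure_val_preimage (hs : ∀ x ∈ s, IsUnit x) :
    Units.val '' (Submonoid.closure (Units.val ⁻¹' s) : Set Mˣ) = Submonoid.closure s := by
  have h := congrArg SetLike.coe (MonoidHom.map_mclosure (Units.coeHom M) (Units.val ⁻¹' s))
  rwa [Submonoid.coe_map, Units.coeHom, MonoidHom.coe_mk, OneHom.coe_mk,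
    Set.image_preimage_eq_of_subset fun x hx => hs x hx] at h

lemma Units.inv_val_preimage_subset (hs : ∀ x ∈ s, x * x = 1) :
    (Units.val ⁻¹' s)⁻¹ ⊆ Units.val ⁻¹' s := by
  intro u (hu : ((u⁻¹ : Mˣ) : M) ∈ s)
  have hu_sq : u⁻¹ * u⁻¹ = 1 := Units.ext (hs _ hu)
  rw [_root_.mul_eq_one_iff_eq_inv, inv_inv] at hu_sq
  rwa [hu_sq] at hu

end Units

lemma s2_mul_s2 : s2 * s2 = -2 := by
  rw [s2, mul_mul_mul_comm, Complex.I_mul_I, ← Complex.ofReal_mul,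
    Real.mul_self_sqrt zero_le_two]
  push_cast
  ring

noncomputable def toComplex : ℤ√(-2) →+* ℂ := lift ⟨s2, by rw [s2_mul_s2]; push_cast; rfl⟩

lemma toComplex_injective : Function.Injective toComplex :=
  lift_injective _ fun n h => by nlinarith [sq_nonneg n]

def toZModThree : ℤ√(-2) →+* ZMod 3 := lift ⟨1, by decide⟩

def a₁ : 𝕄 := !![1, 0; 1 - sqrtd, -1]
def a₂ : 𝕄 := !![-1 + sqrtd, 2; 1 + sqrtd, 1 - sqrtd]
def a₃ : 𝕄 := !![1, -1 - sqrtd; 0, -1]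

lemma image_mapMatrix_toComplex :
    toComplex.mapMatrix '' {a₁, a₂, a₃} = {A₁, A₂, A₃} := by
  have hs : toComplex sqrtd = s2 := by simp [toComplex]
  have h₁ : a₁.map toComplex = A₁ := by
    ext i j; fin_cases i <;> fin_cases j <;> simp [a₁, A₁, hs]
  have h₂ : a₂.map toComplex = A₂ := by
    ext i j; fin_cases i <;> fin_cases j <;> simp [a₂, A₂, hs, map_ofNat]
  have h₃ : a₃.map toComplex = A₃ := by
    ext i j; fin_cases i <;> fin_cases j <;> simp [a₃, A₃, hs]
  simp only [Set.image_insert_eq, Set.image_singleton, RingHom.mapMatrix_apply, h₁, h₂, h₃]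

lemma Matrix.GeneralLinearGroup.map_injective {n R S : Type*} [Fintype n] [DecidableEq n]
    [CommRing R] [CommRing S] {f : R →+* S} (hf : Function.Injective f) :
    Function.Injective (GeneralLinearGroup.map (n := n) f) :=
  Units.map_injective fun _ _ h => Matrix.map_injective hf h

lemma mul_self_eq_one_of_mem_generators : ∀ x ∈ ({a₁, a₂, a₃} : Set 𝕄), x * x = 1 := by
  rintro x (rfl | rfl | rfl) <;> decide +kernel

lemma isUnit_of_mem_generators : ∀ x ∈ ({a₁, a₂, a₃} : Set 𝕄), IsUnit x := fun x hx =>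
  ⟨⟨x, x, mul_self_eq_one_of_mem_generators x hx, mul_self_eq_one_of_mem_generators x hx⟩, rfl⟩

def integralElems : List 𝕄 := (closureStep [a₁, a₂, a₃])^[6] [1]

lemma length_integralElems : integralElems.length = 48 := by decide +kernel

lemma mul_mem_integralElems : ∀ x ∈ integralElems, ∀ g ∈ [a₁, a₂, a₃], x * g ∈ integralElems := by
  decide +kernel

lemma nodup_map_toZModThree_integralElems : (integralElems.map (·.map toZModThree)).Nodup := by
  decide +kernel

def integralGroup : Subgroup (GL (Fin 2) (ℤ√(-2))) :=
  Subgroup.closure (Units.val ⁻¹' {a₁, a₂, a₃})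

lemma image_val_integralGroup : Units.val '' (integralGroup : Set _) = {x | x ∈ integralElems} := by
  have hgens : ({a₁, a₂, a₃} : Set 𝕄) = {g | g ∈ [a₁, a₂, a₃]} := by ext; simp
  rw [← integralGroup.coe_toSubmonoid, integralGroup, Subgroup.closure_toSubmonoid_of_inv_subset
    (Units.inv_val_preimage_subset mul_self_eq_one_of_mem_generators),
    Units.image_val_closure_val_preimage isUnit_of_mem_generators, hgens,
    coe_closure_eq_of_iterate_closureStep mul_mem_integralElems]
  rfl

lemma card_integralGroup : Nat.card integralGroup = 48 := by
  rw [← SetLike.coe_sort_coe, ← Nat.card_image_of_injective Units.val_injective,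
    image_val_integralGroup, ← List.coe_toFinset, Nat.card_coe_set_eq, Set.ncard_coe_finset,
    List.toFinset_card_of_nodup nodup_map_toZModThree_integralElems.of_map, length_integralElems]

lemma injective_map_toZModThree_integralGroup :
    Function.Injective ((GeneralLinearGroup.map toZModThree).comp integralGroup.subtype) := by
  rintro ⟨g, hg⟩ ⟨h, hh⟩ hgh
  have mem_integralElems {k} (hk : k ∈ integralGroup) : (k : 𝕄) ∈ integralElems := by
    simpa only [image_val_integralGroup, Set.mem_ofPred_eq] using Set.mem_image_of_mem Units.val hk
  have hgh' : (g : 𝕄).map toZModThree = (h : 𝕄).map toZModThree := congrArg Units.val hgh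
  exact Subtype.ext <| Units.ext <| List.inj_on_of_nodup_map nodup_map_toZModThree_integralElems
    (mem_integralElems hg) (mem_integralElems hh) hgh'

lemma genGL2_eq_map_integralGroup :
    genGL2 {A₁, A₂, A₃} = integralGroup.map (GeneralLinearGroup.map toComplex) := by
  rw [integralGroup, MonoidHom.map_closure, GeneralLinearGroup.map,
    Units.image_map_val_preimage _ isUnit_of_mem_generators, ← image_mapMatrix_toComplex]
  rfl

lemma card_GL_fin_two_zmod_three : Nat.card (GL (Fin 2) (ZMod 3)) = 48 := by
  rw [Matrix.card_GL_field]
  simp [ZMod.card, Fin.prod_univ_two]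

/-- the subgroup of GL(2,ℂ) generated by A₁, A₂, A₃ has exactly 48
elements and is isomorphic to GL(2,𝔽₃). -/
theorem stmt_14 :
    Nat.card (genGL2 {A₁, A₂, A₃}) = 48 ∧
    Nonempty ((genGL2 {A₁, A₂, A₃}) ≃* GL (Fin 2) (ZMod 3)) := by
  have : Finite integralGroup := Nat.finite_of_card_ne_zero (by rw [card_integralGroup]; norm_num)
  have hbij :
      Function.Bijective ((GeneralLinearGroup.map toZModThree).comp integralGroup.subtype) :=
    (Nat.bijective_iff_injective_and_card _).mpr ⟨injective_map_toZModThree_integralGroup,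
      by rw [card_integralGroup, card_GL_fin_two_zmod_three]⟩
  let e := integralGroup.equivMapOfInjective _
    (GeneralLinearGroup.map_injective toComplex_injective)
  rw [genGL2_eq_map_integralGroup]
  exact ⟨(Nat.card_congr e.toEquiv).symm.trans card_integralGroup,
    ⟨e.symm.trans (MulEquiv.ofBijective _ hbij)⟩⟩
end
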